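/- arXiv:1102.4027 — 10 statements merged into one kernel-verified Lean document; each statement's English description precedes it below -/
import Mathlib

section
/- For every nonzero column vector X in K^n, the set {A X : A alternate in M_n(K)} equals the orthogonal complement {Y in K^n : Y^T X = 0} of X with respect to the standard symmetric bilinear form. -/
open Matrix

lemma vecMulVec_mulVec' {K : Type*} [CommRing K] {n : ℕ} (w v u : Fin n → K) :
    (vecMulVec w v).mulVec u = (v ⬝ᵥ u) • w := by
  funext j
  simp [mulVec, vecMulVec_apply, dotProduct, Finset.mul_sum, mul_comm, mul_left_comm]

theorem stmt_1 {K : Type*} [Field K] {n : ℕ} (X : Fin n → K) (hX : X ≠ 0) :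
    {Y : Fin n → K | ∃ A : Matrix (Fin n) (Fin n) K,
        (∀ Z : Fin n → K, Z ⬝ᵥ A.mulVec Z = 0) ∧ A.mulVec X = Y} =
      {Y : Fin n → K | Y ⬝ᵥ X = 0} := by
  ext Y
  simp only [Set.mem_setOf_eq]
  constructor
  · rintro ⟨A, hA, rfl⟩
    rw [dotProduct_comm]
    exact hA X
  · intro hY
    obtain ⟨i, hi⟩ : ∃ i, X i ≠ 0 := by
      by_contra h
      push_neg at h
      exact hX (funext fun i => h i)
    refine ⟨(X i)⁻¹ • (vecMulVec Y (Pi.single i 1) - vecMulVec (Pi.single i 1) Y), ?_, ?_⟩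
    · intro Z
      rw [smul_mulVec, sub_mulVec, vecMulVec_mulVec', vecMulVec_mulVec',
        dotProduct_smul, dotProduct_sub, dotProduct_smul, dotProduct_smul,
        single_dotProduct, dotProduct_single, one_mul, mul_one, dotProduct_comm]
      ring_nf
    · rw [smul_mulVec, sub_mulVec, vecMulVec_mulVec', vecMulVec_mulVec',
        single_dotProduct, one_mul, hY, zero_smul, sub_zero]
      funext j
      simp only [Pi.smul_apply, smul_eq_mul]
      field_simp
end

section
/- If P in GL_n(K) is non-isotropic (i.e., X^T P X ≠ 0 for all nonzero X in K^n), then the affine subspace I_n + P·Alt_n(K) of M_n(K) consists entirely of invertible matrices. -/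
open Matrix

theorem stmt_3 {K : Type*} [Field K] {n : ℕ}
    (P : Matrix (Fin n) (Fin n) K) (hP : IsUnit P)
    (hiso : ∀ X : Fin n → K, X ≠ 0 → X ⬝ᵥ P.mulVec X ≠ 0)
    (A : Matrix (Fin n) (Fin n) K)
    (hA : ∀ Z : Fin n → K, Z ⬝ᵥ A.mulVec Z = 0) :
    IsUnit (1 + P * A) := by
  rw [Matrix.isUnit_iff_isUnit_det, isUnit_iff_ne_zero]
  intro hdet
  obtain ⟨v, hv, hv0⟩ := (Matrix.exists_mulVec_eq_zero_iff).2 hdet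
  set Y := A.mulVec v with hY
  have h1 : v + P.mulVec Y = 0 := by
    simpa [Matrix.add_mulVec, Matrix.one_mulVec, ← Matrix.mulVec_mulVec] using hv0
  have h2 : Y ⬝ᵥ (v + P.mulVec Y) = 0 := by rw [h1, dotProduct_zero]
  have h3 : Y ⬝ᵥ v = 0 := by
    rw [dotProduct_comm, hY]; exact hA v
  have h4 : Y ⬝ᵥ P.mulVec Y = 0 := by
    rw [dotProduct_add, h3, zero_add] at h2; exact h2
  have hY0 : Y = 0 := by
    by_contra h
    exact hiso Y h h4
  rw [hY0, Matrix.mulVec_zero, add_zero] at h1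
  exact hv h1
end

section
/- Let n, p, r be positive integers with r ≤ min(n,p), and let W be an affine subspace of M_r(K) consisting of invertible matrices with dim W = r(r-1)/2. Then the affine subspace i_{n,p}(W) of M_{n,p}(K), consisting of all matrices whose upper-left r×r block lies in W (with arbitrary other entries), has lower rank exactly r and codimension r(r+1)/2 in M_{n,p}(K). -/
open Matrix

theorem stmt_6 {K : Type*} [Field K] {n p r : ℕ}
    (hr : 1 ≤ r) (hrn : r ≤ n) (hrp : r ≤ p)
    (A : Matrix (Fin r) (Fin r) K)
    (S : Submodule K (Matrix (Fin r) (Fin r) K))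
    (hW : ∀ B ∈ S, IsUnit (A + B))
    (hdim : Module.finrank K S = r * (r - 1) / 2) :
    (∀ M : Matrix (Fin n) (Fin p) K,
        (∃ B ∈ S, ∀ i j : Fin r,
            M (Fin.castLE hrn i) (Fin.castLE hrp j) = (A + B) i j) →
        r ≤ M.rank) ∧
    (∃ M : Matrix (Fin n) (Fin p) K,
        (∃ B ∈ S, ∀ i j : Fin r,
            M (Fin.castLE hrn i) (Fin.castLE hrp j) = (A + B) i j) ∧
        M.rank = r) ∧
    (∃ (A' : Matrix (Fin n) (Fin p) K)
       (S' : Submodule K (Matrix (Fin n) (Fin p) K)),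
        {M : Matrix (Fin n) (Fin p) K | ∃ B ∈ S, ∀ i j : Fin r,
            M (Fin.castLE hrn i) (Fin.castLE hrp j) = (A + B) i j}
          = {M : Matrix (Fin n) (Fin p) K | ∃ B ∈ S', M = A' + B} ∧
        Module.finrank K S' + r * (r + 1) / 2 = n * p) := by
  classical
  -- selection matrices
  set P : Matrix (Fin r) (Fin n) K :=
    Matrix.of (fun i a => if Fin.castLE hrn i = a then (1 : K) else 0) with hP
  set Q : Matrix (Fin p) (Fin r) K :=
    Matrix.of (fun b j => if b = Fin.castLE hrp j then (1 : K) else 0) with hQ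
  set E : Matrix (Fin n) (Fin r) K :=
    Matrix.of (fun a i => if a = Fin.castLE hrn i then (1 : K) else 0) with hE
  set F : Matrix (Fin r) (Fin p) K :=
    Matrix.of (fun j b => if Fin.castLE hrp j = b then (1 : K) else 0) with hF
  have hsub : ∀ M : Matrix (Fin n) (Fin p) K,
      P * M * Q = M.submatrix (Fin.castLE hrn) (Fin.castLE hrp) := by
    intro M
    ext i j
    simp [hP, hQ, Matrix.mul_apply, ite_mul, mul_ite, Finset.mul_sum, Finset.sum_ite_eq,
      Finset.sum_ite_eq']
  have hPE : P * E = 1 := by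
    ext i j
    simp [hP, hE, Matrix.mul_apply, ite_mul, one_mul, Finset.sum_ite_eq, Matrix.one_apply,
      Fin.castLE_inj]
  have hFQ : F * Q = 1 := by
    ext i j
    simp [hF, hQ, Matrix.mul_apply, ite_mul, mul_ite, Finset.sum_ite_eq', Matrix.one_apply,
      Fin.castLE_inj]
  have hECF : ∀ C : Matrix (Fin r) (Fin r) K,
      (E * C * F).submatrix (Fin.castLE hrn) (Fin.castLE hrp) = C := by
    intro C
    rw [← hsub]
    calc P * (E * C * F) * Q = P * E * (C * (F * Q)) := by
          simp only [Matrix.mul_assoc]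
      _ = C := by rw [hPE, hFQ, Matrix.mul_one, Matrix.one_mul]
  -- Part 1
  have part1 : ∀ M : Matrix (Fin n) (Fin p) K,
      (∃ B ∈ S, ∀ i j : Fin r,
          M (Fin.castLE hrn i) (Fin.castLE hrp j) = (A + B) i j) → r ≤ M.rank := by
    intro M ⟨B, hB, hMB⟩
    have hcor : P * M * Q = A + B := by
      rw [hsub]; ext i j; exact hMB i j
    have hrank : (P * M * Q).rank = r := by
      rw [hcor, Matrix.rank_of_isUnit _ (hW B hB), Fintype.card_fin]
    calc r = (P * M * Q).rank := hrank.symm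
      _ ≤ (P * M).rank := Matrix.rank_mul_le_left _ _
      _ ≤ M.rank := Matrix.rank_mul_le_right _ _
  refine ⟨part1, ?_, ?_⟩
  · -- Part 2
    refine ⟨E * A * F, ⟨0, S.zero_mem, ?_⟩, ?_⟩
    · intro i j
      have := congrFun (congrFun (hECF A) i) j
      simpa using this
    · refine le_antisymm ?_ ?_
      · calc (E * A * F).rank ≤ (E * A).rank := Matrix.rank_mul_le_left _ _
          _ ≤ Fintype.card (Fin r) := Matrix.rank_le_card_width _
          _ = r := Fintype.card_fin r
      · exact part1 _ ⟨0, S.zero_mem, fun i j => by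
          have := congrFun (congrFun (hECF A) i) j
          simpa using this⟩
  · -- Part 3
    set π : Matrix (Fin n) (Fin p) K →ₗ[K] Matrix (Fin r) (Fin r) K :=
      { toFun := fun M => M.submatrix (Fin.castLE hrn) (Fin.castLE hrp)
        map_add' := fun _ _ => rfl
        map_smul' := fun _ _ => rfl } with hπ
    have hπapp : ∀ M, π M = M.submatrix (Fin.castLE hrn) (Fin.castLE hrp) := fun _ => rfl
    have hπsurj : Function.Surjective π := fun C => ⟨E * C * F, hECF C⟩
    refine ⟨E * A * F, S.comap π, ?_, ?_⟩
    · ext M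
      simp only [Set.mem_setOf_eq, Submodule.mem_comap]
      constructor
      · rintro ⟨B, hB, hMB⟩
        refine ⟨M - E * A * F, ?_, by abel⟩
        have : π (M - E * A * F) = B := by
          rw [map_sub, hπapp, hπapp, hECF]
          ext i j
          simp [hMB i j]
        rw [this]; exact hB
      · rintro ⟨B, hB, rfl⟩
        refine ⟨π B, hB, fun i j => ?_⟩
        have h1 : π (E * A * F + B) = A + π B := by
          rw [map_add, hπapp, hECF]
        exact congrFun (congrFun h1 i) j
    · -- dimension count
      set ψ : Matrix (Fin n) (Fin p) K →ₗ[K] (Matrix (Fin r) (Fin r) K ⧸ S) :=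
        S.mkQ.comp π with hψ
      have hker : LinearMap.ker ψ = S.comap π := by
        rw [hψ, LinearMap.ker_comp, Submodule.ker_mkQ]
      have hrange : LinearMap.range ψ = ⊤ :=
        LinearMap.range_eq_top.mpr ((Submodule.mkQ_surjective S).comp hπsurj)
      have hrn2 := LinearMap.finrank_range_add_finrank_ker ψ
      rw [hrange, hker, finrank_top] at hrn2
      have hquot := Submodule.finrank_quotient_add_finrank S
      have hM1 : Module.finrank K (Matrix (Fin n) (Fin p) K) = n * p := by
        rw [Module.finrank_matrix]
        simp
      have hM2 : Module.finrank K (Matrix (Fin r) (Fin r) K) = r * r := by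
        rw [Module.finrank_matrix]
        simp
      rw [hM1] at hrn2
      rw [hM2, hdim] at hquot
      -- arithmetic
      have hx : r * (r + 1) = r * (r - 1) + 2 * r := by
        have h1 : r - 1 + 2 = r + 1 := by omega
        calc r * (r + 1) = r * (r - 1 + 2) := by rw [h1]
          _ = r * (r - 1) + 2 * r := by rw [Nat.mul_add]; ring
      have hy : r * r = r * (r - 1) + r := by
        have h1 : r - 1 + 1 = r := by omega
        calc r * r = r * (r - 1 + 1) := by rw [h1]
          _ = r * (r - 1) + r := by rw [Nat.mul_add, Nat.mul_one]
      obtain ⟨a, ha⟩ : ∃ a, r * (r - 1) = 2 * a := by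
        rcases Nat.even_mul_succ_self (r - 1) with ⟨a, h⟩
        have h1 : r - 1 + 1 = r := by omega
        rw [h1] at h
        exact ⟨a, by rw [mul_comm, h, two_mul]⟩
      rw [ha] at hx
      rw [hy, ha] at hquot
      rw [hx]
      generalize n * p = N at hrn2 ⊢
      omega
end

section
/- Let W and W' be affine subspaces of invertible matrices in M_r(K), each of dimension r(r-1)/2, and suppose i_{n,p}(W') = P i_{n,p}(W) Q for some P ∈ GL_n(K), Q ∈ GL_p(K). Then there exist P₀, Q₀ ∈ GL_r(K) with W' = P₀ W Q₀. -/
open Matrix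

private lemma sum_fin_restrict {β : Type*} [AddCommMonoid β] {r n : ℕ} (hrn : r ≤ n)
    (f : Fin n → β) (hf : ∀ k : Fin n, ¬ k.1 < r → f k = 0) :
    ∑ k, f k = ∑ k : Fin r, f (Fin.castLE hrn k) := by
  classical
  calc ∑ k, f k = ∑ k ∈ Finset.univ.map (Fin.castLEEmb hrn), f k := by
        refine (Finset.sum_subset (Finset.subset_univ _) ?_).symm
        intro x _ hx
        refine hf x fun hlt => hx ?_
        simp only [Finset.mem_map, Finset.mem_univ, true_and]
        exact ⟨⟨x.1, hlt⟩, rfl⟩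
    _ = ∑ k : Fin r, f (Fin.castLE hrn k) := by rw [Finset.sum_map]; rfl

private def embed {K : Type*} [Field K] {n p r : ℕ} (_hrn : r ≤ n) (_hrp : r ≤ p)
    (C : Matrix (Fin r) (Fin r) K) : Matrix (Fin n) (Fin p) K :=
  fun a b => if h1 : a.1 < r then if h2 : b.1 < r then C ⟨a.1, h1⟩ ⟨b.1, h2⟩ else 0 else 0

private lemma embed_apply {K : Type*} [Field K] {n p r : ℕ} (hrn : r ≤ n) (hrp : r ≤ p)
    (C : Matrix (Fin r) (Fin r) K) (i j : Fin r) :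
    embed hrn hrp C (Fin.castLE hrn i) (Fin.castLE hrp j) = C i j := by
  simp [embed, Fin.castLE]

private lemma mul_embed_mul {K : Type*} [Field K] {n p r : ℕ} (hrn : r ≤ n) (hrp : r ≤ p)
    (P : Matrix (Fin n) (Fin n) K) (Q : Matrix (Fin p) (Fin p) K)
    (C : Matrix (Fin r) (Fin r) K) (i j : Fin r) :
    (P * embed hrn hrp C * Q) (Fin.castLE hrn i) (Fin.castLE hrp j)
      = (P.submatrix (Fin.castLE hrn) (Fin.castLE hrn) * C *
          Q.submatrix (Fin.castLE hrp) (Fin.castLE hrp)) i j := by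
  have hv : ∀ l : Fin p, ¬ l.1 < r →
      (P * embed hrn hrp C) (Fin.castLE hrn i) l * Q l (Fin.castLE hrp j) = 0 := by
    intro l hl
    have h0 : (P * embed hrn hrp C) (Fin.castLE hrn i) l = 0 := by
      rw [Matrix.mul_apply]
      refine Finset.sum_eq_zero fun k _ => ?_
      have : embed hrn hrp C k l = 0 := by
        by_cases hk : k.1 < r <;> simp [embed, hk, hl]
      rw [this, mul_zero]
    rw [h0, zero_mul]
  have hR : (P.submatrix (Fin.castLE hrn) (Fin.castLE hrn) * C *
        Q.submatrix (Fin.castLE hrp) (Fin.castLE hrp)) i j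
      = ∑ l : Fin r, (∑ k : Fin r, P (Fin.castLE hrn i) (Fin.castLE hrn k) * C k l)
          * Q (Fin.castLE hrp l) (Fin.castLE hrp j) := by
    rw [Matrix.mul_apply]
    refine Finset.sum_congr rfl fun l _ => ?_
    rw [Matrix.mul_apply]
    rfl
  rw [hR, Matrix.mul_apply, sum_fin_restrict hrp _ hv]
  refine Finset.sum_congr rfl fun l _ => ?_
  congr 1
  rw [Matrix.mul_apply, sum_fin_restrict hrn
    (fun k => P (Fin.castLE hrn i) k * embed hrn hrp C k (Fin.castLE hrp l))
    (fun k hk => by simp [embed, hk])]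
  refine Finset.sum_congr rfl fun k _ => ?_
  rw [embed_apply]

theorem stmt_8 {K : Type*} [Field K] {n p r : ℕ}
    (hr : 1 ≤ r) (hrn : r ≤ n) (hrp : r ≤ p)
    (A A' : Matrix (Fin r) (Fin r) K)
    (S S' : Submodule K (Matrix (Fin r) (Fin r) K))
    (hW : ∀ B ∈ S, IsUnit (A + B)) (hW' : ∀ B ∈ S', IsUnit (A' + B))
    (hd : Module.finrank K S = r * (r - 1) / 2)
    (hd' : Module.finrank K S' = r * (r - 1) / 2)
    (P : Matrix (Fin n) (Fin n) K) (Q : Matrix (Fin p) (Fin p) K)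
    (hP : IsUnit P) (hQ : IsUnit Q)
    (h : {M : Matrix (Fin n) (Fin p) K | ∃ B ∈ S', ∀ i j : Fin r,
            M (Fin.castLE hrn i) (Fin.castLE hrp j) = (A' + B) i j}
        = (fun M => P * M * Q) '' {M : Matrix (Fin n) (Fin p) K | ∃ B ∈ S,
            ∀ i j : Fin r,
              M (Fin.castLE hrn i) (Fin.castLE hrp j) = (A + B) i j}) :
    ∃ P₀ Q₀ : Matrix (Fin r) (Fin r) K, IsUnit P₀ ∧ IsUnit Q₀ ∧
      {M : Matrix (Fin r) (Fin r) K | ∃ B ∈ S', M = A' + B}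
        = (fun M => P₀ * M * Q₀) ''
            {M : Matrix (Fin r) (Fin r) K | ∃ B ∈ S, M = A + B} := by
  classical
  set P₀ : Matrix (Fin r) (Fin r) K := P.submatrix (Fin.castLE hrn) (Fin.castLE hrn) with hP₀def
  set Q₀ : Matrix (Fin r) (Fin r) K := Q.submatrix (Fin.castLE hrp) (Fin.castLE hrp) with hQ₀def
  have key : ∀ B ∈ S, ∃ B' ∈ S', P₀ * (A + B) * Q₀ = A' + B' := by
    intro B hB
    have hmem : embed hrn hrp (A + B) ∈ {M : Matrix (Fin n) (Fin p) K | ∃ B ∈ S,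
        ∀ i j : Fin r, M (Fin.castLE hrn i) (Fin.castLE hrp j) = (A + B) i j} :=
      ⟨B, hB, fun i j => embed_apply hrn hrp (A + B) i j⟩
    have himg : P * embed hrn hrp (A + B) * Q ∈ {M : Matrix (Fin n) (Fin p) K | ∃ B ∈ S',
        ∀ i j : Fin r, M (Fin.castLE hrn i) (Fin.castLE hrp j) = (A' + B) i j} := by
      rw [h]; exact ⟨_, hmem, rfl⟩
    obtain ⟨B', hB', hBeq⟩ := himg
    refine ⟨B', hB', ?_⟩
    ext i j
    rw [← mul_embed_mul hrn hrp P Q (A + B) i j, hBeq]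
  obtain ⟨B₀', hB₀', hB₀eq⟩ := key 0 S.zero_mem
  rw [add_zero] at hB₀eq
  have hunit : IsUnit (P₀ * A * Q₀) := hB₀eq ▸ hW' B₀' hB₀'
  have hdet : IsUnit ((P₀ * A * Q₀).det) := (Matrix.isUnit_iff_isUnit_det _).1 hunit
  rw [Matrix.det_mul, Matrix.det_mul] at hdet
  have hPu : IsUnit P₀ := (Matrix.isUnit_iff_isUnit_det _).2 (isUnit_of_mul_isUnit_left
    (isUnit_of_mul_isUnit_left hdet))
  have hQu : IsUnit Q₀ := (Matrix.isUnit_iff_isUnit_det _).2 (isUnit_of_mul_isUnit_right hdet)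
  refine ⟨P₀, Q₀, hPu, hQu, ?_⟩
  let g : Matrix (Fin r) (Fin r) K →ₗ[K] Matrix (Fin r) (Fin r) K :=
    (LinearMap.mulRight K Q₀).comp (LinearMap.mulLeft K P₀)
  let g' : Matrix (Fin r) (Fin r) K →ₗ[K] Matrix (Fin r) (Fin r) K :=
    (LinearMap.mulRight K Q₀⁻¹).comp (LinearMap.mulLeft K P₀⁻¹)
  have hdP : IsUnit P₀.det := (Matrix.isUnit_iff_isUnit_det _).1 hPu
  have hdQ : IsUnit Q₀.det := (Matrix.isUnit_iff_isUnit_det _).1 hQu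
  have hgg' : ∀ M, g (g' M) = M := by
    intro M
    show P₀ * (P₀⁻¹ * M * Q₀⁻¹) * Q₀ = M
    rw [← mul_assoc, Matrix.mul_nonsing_inv_cancel_left _ _ hdP,
      Matrix.nonsing_inv_mul_cancel_right _ _ hdQ]
  have hg'g : ∀ M, g' (g M) = M := by
    intro M
    show P₀⁻¹ * (P₀ * M * Q₀) * Q₀⁻¹ = M
    rw [← mul_assoc, Matrix.nonsing_inv_mul_cancel_left _ _ hdP,
      Matrix.mul_nonsing_inv_cancel_right _ _ hdQ]
  let e : Matrix (Fin r) (Fin r) K ≃ₗ[K] Matrix (Fin r) (Fin r) K :=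
    LinearEquiv.ofLinear g g' (LinearMap.ext hgg') (LinearMap.ext hg'g)
  have hle : S.map (e : Matrix (Fin r) (Fin r) K →ₗ[K] Matrix (Fin r) (Fin r) K) ≤ S' := by
    rintro _ ⟨B, hB, rfl⟩
    obtain ⟨B', hB', hBeq⟩ := key B hB
    have heB : (e : Matrix (Fin r) (Fin r) K →ₗ[K] Matrix (Fin r) (Fin r) K) B
        = B' - B₀' := by
      show P₀ * B * Q₀ = B' - B₀'
      have : P₀ * (A + B) * Q₀ = P₀ * A * Q₀ + P₀ * B * Q₀ := by
        rw [mul_add, add_mul]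
      rw [this, hB₀eq] at hBeq
      have := congrArg (fun X => X - (A' + B₀')) hBeq
      simpa using by
        have : A' + B₀' + P₀ * B * Q₀ - (A' + B₀') = A' + B' - (A' + B₀') := by
          rw [hBeq]
        calc P₀ * B * Q₀ = A' + B₀' + P₀ * B * Q₀ - (A' + B₀') := by abel
          _ = A' + B' - (A' + B₀') := this
          _ = B' - B₀' := by abel
    rw [heB]
    exact S'.sub_mem hB' hB₀'
  have hfr : Module.finrank K (S.map (e : Matrix (Fin r) (Fin r) K →ₗ[K]
      Matrix (Fin r) (Fin r) K)) = Module.finrank K S' := by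
    rw [LinearEquiv.finrank_map_eq e S, hd, hd']
  have hSeq : S.map (e : Matrix (Fin r) (Fin r) K →ₗ[K] Matrix (Fin r) (Fin r) K) = S' :=
    Submodule.eq_of_le_of_finrank_eq hle hfr
  ext M
  constructor
  · rintro ⟨B', hB', rfl⟩
    rw [← hSeq] at hB' hB₀'
    obtain ⟨C, hC, hCe⟩ := hB'
    obtain ⟨C₀, hC₀, hC₀e⟩ := hB₀'
    refine ⟨A + (C - C₀), ⟨C - C₀, S.sub_mem hC hC₀, rfl⟩, ?_⟩
    show P₀ * (A + (C - C₀)) * Q₀ = A' + B'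
    have hCe' : P₀ * C * Q₀ = B' := hCe
    have hC₀e' : P₀ * C₀ * Q₀ = B₀' := hC₀e
    have hA' : A' = P₀ * A * Q₀ - B₀' := by rw [hB₀eq]; abel
    rw [hA', ← hCe', ← hC₀e', mul_add, add_mul, mul_sub, sub_mul]
    abel
  · rintro ⟨_, ⟨B, hB, rfl⟩, rfl⟩
    obtain ⟨B', hB', hBeq⟩ := key B hB
    exact ⟨B', hB', hBeq⟩
end

section
/- Let W be an affine subspace of M_r(K) consisting of invertible matrices, let A ∈ W, and let K_W be the set of vectors x ∈ K^r such that every rank-at-most-1 matrix of M_r(K) with column space contained in span(x) belongs to the translation vector space of W. Then K_W = {0}. -/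
open Matrix

theorem stmt_9 {K : Type*} [Field K] {r : ℕ} (hr : 1 ≤ r)
    (A : Matrix (Fin r) (Fin r) K)
    (S : Submodule K (Matrix (Fin r) (Fin r) K))
    (hW : ∀ B ∈ S, IsUnit (A + B))
    (x : Fin r → K)
    (hx : ∀ B : Matrix (Fin r) (Fin r) K,
        (∀ j, ∃ c : K, ∀ i, B i j = c * x i) → B ∈ S) :
    x = 0 := by
  by_contra hx0
  have hA : IsUnit A := by simpa using hW 0 S.zero_mem
  obtain ⟨u, hu⟩ := hA
  set y : Fin r → K := (↑u⁻¹ : Matrix (Fin r) (Fin r) K) *ᵥ x with hy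
  have hAy : A *ᵥ y = x := by
    rw [hy, mulVec_mulVec, ← hu, u.mul_inv, one_mulVec]
  have hy0 : y ≠ 0 := by
    intro h
    apply hx0
    rw [← hAy, h, mulVec_zero]
  obtain ⟨i0, hi0'⟩ := Function.ne_iff.mp hy0
  have hi0 : y i0 ≠ 0 := by simpa using hi0'
  set v : Fin r → K := fun j => if j = i0 then -(y i0)⁻¹ else 0 with hv
  have hvy : v ⬝ᵥ y = -1 := by
    simp [hv, dotProduct, ite_mul, Finset.sum_ite_eq', inv_mul_cancel₀ hi0]
  set B := vecMulVec x v with hB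
  have hBS : B ∈ S := by
    apply hx
    intro j
    exact ⟨v j, fun i => by simp [hB, vecMulVec_apply, mul_comm]⟩
  have hABy : (A + B) *ᵥ y = 0 := by
    rw [add_mulVec, hAy, hB]
    have : vecMulVec x v *ᵥ y = (v ⬝ᵥ y) • x := by
      ext i
      simp only [vecMulVec_apply, mulVec, dotProduct, Pi.smul_apply, smul_eq_mul]
      rw [Finset.sum_mul]
      exact Finset.sum_congr rfl fun j _ => by ring
    rw [this, hvy]
    simp
  have := (mulVec_injective_iff_isUnit.mpr (hW B hBS)) (by rw [hABy, mulVec_zero] : (A + B) *ᵥ y = (A + B) *ᵥ 0)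
  exact hy0 this
end

section
/- Let K be a field with at least 3 elements and C₁ ∈ M_{n-1,1}(K), f : M_{1,n-1}(K) → M_{n-1,1}(K) linear. Suppose that for all (α, L) ∈ K × M_{1,n-1}(K), the equation α(1 - L C₁) = L f(L) implies α = 0 and f(L) = 0. Then f = 0 and C₁ = 0. -/
open Matrix

theorem stmt_11 {K : Type*} [Field K]
    (h3 : ∃ a b : K, a ≠ 0 ∧ b ≠ 0 ∧ a ≠ b)
    {n : ℕ} (hn : 2 ≤ n)
    (C₁ : Fin (n - 1) → K)
    (f : (Fin (n - 1) → K) →ₗ[K] (Fin (n - 1) → K))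
    (h : ∀ (α : K) (L : Fin (n - 1) → K),
        α * (1 - L ⬝ᵥ C₁) = L ⬝ᵥ f L → α = 0 ∧ f L = 0) :
    f = 0 ∧ C₁ = 0 := by
  obtain ⟨a, b, ha, hb, hab⟩ := h3
  set t : K := a * b⁻¹ with ht
  have ht0 : t ≠ 0 := mul_ne_zero ha (inv_ne_zero hb)
  have ht1 : t ≠ 1 := by
    intro h1
    apply hab
    rw [ht, mul_inv_eq_one₀ hb] at h1
    exact h1
  have hf : ∀ L, f L = 0 := by
    intro L
    by_cases hc : (1 : K) - L ⬝ᵥ C₁ = 0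
    · have hc' : L ⬝ᵥ C₁ = 1 := (sub_eq_zero.mp hc).symm
      have heq : (t ^ 2 * (L ⬝ᵥ f L)) / (1 - t) * (1 - (t • L) ⬝ᵥ C₁)
          = (t • L) ⬝ᵥ f (t • L) := by
        rw [_root_.map_smul, smul_dotProduct, dotProduct_smul, smul_dotProduct, hc']
        have h1t : (1 : K) - t ≠ 0 := sub_ne_zero.mpr (Ne.symm ht1)
        field_simp
        ring
      have h2 := (h _ _ heq).2
      rw [_root_.map_smul] at h2
      rcases smul_eq_zero.mp h2 with h | h
      · exact absurd h ht0
      · exact h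
    · have heq : (L ⬝ᵥ f L) / (1 - L ⬝ᵥ C₁) * (1 - L ⬝ᵥ C₁) = L ⬝ᵥ f L :=
        div_mul_cancel₀ _ hc
      exact (h _ _ heq).2
  constructor
  · exact LinearMap.ext hf
  · funext i
    by_contra hC
    have hC' : C₁ i ≠ 0 := hC
    set L : Fin (n - 1) → K := Pi.single i (C₁ i)⁻¹ with hL
    have hLC : L ⬝ᵥ C₁ = 1 := by
      simp [hL, single_dotProduct, inv_mul_cancel₀ hC']
    have heq : (1 : K) * (1 - L ⬝ᵥ C₁) = L ⬝ᵥ f L := by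
      rw [hLC, hf L]
      simp
    exact one_ne_zero (h _ _ heq).1
end

section
/- Let P ∈ GL_n(K) be non-isotropic and A₁ ∈ M_n(K) be not alternate. If K has at least 3 elements, then there exist β ∈ K \ {0}, N ∈ Alt_n(K), and a nonzero X ∈ K^n such that (I_n + P N + β P A₁) X = 0 and X^T A₁ X ≠ 0. -/
open Matrix

lemma vecMulVec_mulVec_eq {K : Type*} [Field K] {n : ℕ} (y f z : Fin n → K) :
    (vecMulVec y f).mulVec z = (f ⬝ᵥ z) • y := by
  ext i
  simp only [vecMulVec, mulVec, dotProduct, Pi.smul_apply, smul_eq_mul,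
    Matrix.of_apply, Finset.sum_mul]
  exact Finset.sum_congr rfl fun j _ => by ring

theorem stmt_14 {K : Type*} [Field K]
    (h3 : ∃ a b : K, a ≠ 0 ∧ b ≠ 0 ∧ a ≠ b)
    {n : ℕ} (hn : 1 ≤ n)
    (P : Matrix (Fin n) (Fin n) K) (hP : IsUnit P)
    (hiso : ∀ X : Fin n → K, X ≠ 0 → X ⬝ᵥ P.mulVec X ≠ 0)
    (A₁ : Matrix (Fin n) (Fin n) K)
    (hA₁ : ∃ X : Fin n → K, X ⬝ᵥ A₁.mulVec X ≠ 0) :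
    ∃ (β : K) (N : Matrix (Fin n) (Fin n) K) (X : Fin n → K),
      β ≠ 0 ∧ (∀ Z : Fin n → K, Z ⬝ᵥ N.mulVec Z = 0) ∧ X ≠ 0 ∧
      (1 + P * N + β • (P * A₁)).mulVec X = 0 ∧
      X ⬝ᵥ A₁.mulVec X ≠ 0 := by
  obtain ⟨X, hc⟩ := hA₁
  have hX : X ≠ 0 := by
    rintro rfl; simp at hc
  have hdet : IsUnit P.det := (Matrix.isUnit_iff_isUnit_det P).mp hP
  have hPPinv : P * P⁻¹ = 1 := Matrix.mul_nonsing_inv P hdet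
  set W : Fin n → K := P⁻¹.mulVec X with hW
  have hPW : P.mulVec W = X := by
    rw [hW, Matrix.mulVec_mulVec, hPPinv, Matrix.one_mulVec]
  have hWne : W ≠ 0 := by
    intro h
    apply hX
    rw [← hPW, h, Matrix.mulVec_zero]
  have hXW : X ⬝ᵥ W ≠ 0 := by
    have h1 : X ⬝ᵥ W = W ⬝ᵥ P.mulVec W := by
      conv_lhs => rw [← hPW]
      exact dotProduct_comm _ _
    rw [h1]
    exact hiso W hWne
  set c : K := X ⬝ᵥ A₁.mulVec X with hcdef
  set β : K := -(X ⬝ᵥ W) / c with hβ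
  have hβne : β ≠ 0 := by
    rw [hβ]
    exact div_ne_zero (neg_ne_zero.mpr hXW) hc
  set Y : Fin n → K := -(W + β • A₁.mulVec X) with hY
  have hYX : Y ⬝ᵥ X = 0 := by
    rw [hY, neg_dotProduct, add_dotProduct, smul_dotProduct]
    have h1 : W ⬝ᵥ X = X ⬝ᵥ W := dotProduct_comm _ _
    have h2 : A₁.mulVec X ⬝ᵥ X = c := by
      rw [dotProduct_comm]
    rw [h1, h2, hβ, smul_eq_mul]
    field_simp
    ring
  obtain ⟨i, hi⟩ : ∃ i, X i ≠ 0 := by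
    by_contra h
    push_neg at h
    exact hX (funext h)
  set f : Fin n → K := fun j => if j = i then (X i)⁻¹ else 0 with hf
  have hfX : f ⬝ᵥ X = 1 := by
    simp only [hf, dotProduct, ite_mul, zero_mul, Finset.sum_ite_eq',
      Finset.mem_univ, if_true]
    exact inv_mul_cancel₀ hi
  set N : Matrix (Fin n) (Fin n) K := vecMulVec Y f - vecMulVec f Y with hN
  have hNmul : ∀ z, N.mulVec z = (f ⬝ᵥ z) • Y - (Y ⬝ᵥ z) • f := by
    intro z
    rw [hN, Matrix.sub_mulVec, vecMulVec_mulVec_eq, vecMulVec_mulVec_eq]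
  have halt : ∀ Z : Fin n → K, Z ⬝ᵥ N.mulVec Z = 0 := by
    intro Z
    rw [hNmul, dotProduct_sub, dotProduct_smul, dotProduct_smul,
      dotProduct_comm Z Y, dotProduct_comm Z f, smul_eq_mul, smul_eq_mul]
    ring
  have hNX : N.mulVec X = Y := by
    rw [hNmul, hfX, hYX, one_smul, zero_smul, sub_zero]
  have hsum : Y + β • A₁.mulVec X = -W := by
    rw [hY]; abel
  refine ⟨β, N, X, hβne, halt, hX, ?_, hc⟩
  rw [Matrix.add_mulVec, Matrix.add_mulVec, Matrix.one_mulVec,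
    ← Matrix.mulVec_mulVec, hNX, Matrix.smul_mulVec,
    ← Matrix.mulVec_mulVec, ← Matrix.mulVec_smul, add_assoc,
    ← Matrix.mulVec_add, hsum, Matrix.mulVec_neg, hPW, add_neg_cancel]
end

section
/- Let P ∈ GL_n(K) be non-isotropic with K a field of at least 3 elements, n ≥ 2. Then for each nonzero vector e ∈ K^n there exists a basis (e, f₂, …, f_n) of K^n such that e^T P f_i = 0 for all i ∈ {2,…,n}; consequently, P is congruent to a matrix of the block form [[α, 0],[C, Z]] with α ∈ K \ {0}, C ∈ M_{n-1,1}(K), and Z ∈ GL_{n-1}(K) non-isotropic. -/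
open Matrix

theorem stmt_15 {K : Type*} [Field K]
    (h3 : ∃ a b : K, a ≠ 0 ∧ b ≠ 0 ∧ a ≠ b)
    {m : ℕ} (hm : 1 ≤ m)
    (P : Matrix (Fin (m + 1)) (Fin (m + 1)) K) (hP : IsUnit P)
    (hiso : ∀ X : Fin (m + 1) → K, X ≠ 0 → X ⬝ᵥ P.mulVec X ≠ 0) :
    (∀ e : Fin (m + 1) → K, e ≠ 0 →
        ∃ b : Module.Basis (Fin (m + 1)) K (Fin (m + 1) → K),
          b 0 = e ∧ ∀ i : Fin (m + 1), i ≠ 0 → e ⬝ᵥ P.mulVec (b i) = 0) ∧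
    (∃ Q : Matrix (Fin (m + 1)) (Fin (m + 1)) K, IsUnit Q ∧
        (Q * P * Qᵀ) 0 0 ≠ 0 ∧
        (∀ j : Fin m, (Q * P * Qᵀ) 0 j.succ = 0) ∧
        IsUnit ((Q * P * Qᵀ).submatrix Fin.succ Fin.succ) ∧
        (∀ X : Fin m → K, X ≠ 0 →
            X ⬝ᵥ ((Q * P * Qᵀ).submatrix Fin.succ Fin.succ).mulVec X ≠ 0)) := by
  have key : ∀ e : Fin (m + 1) → K, e ≠ 0 →
      ∃ b : Module.Basis (Fin (m + 1)) K (Fin (m + 1) → K),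
        b 0 = e ∧ ∀ i : Fin (m + 1), i ≠ 0 → e ⬝ᵥ P.mulVec (b i) = 0 := by
    intro e he
    set φ : (Fin (m + 1) → K) →ₗ[K] K :=
      { toFun := fun x => e ⬝ᵥ P.mulVec x
        map_add' := by intro x y; simp [Matrix.mulVec_add, dotProduct_add]
        map_smul' := by intro c x; simp [Matrix.mulVec_smul] } with hφdef
    have hφe : φ e ≠ 0 := hiso e he
    have hφne : φ ≠ 0 := by
      intro h; exact hφe (by simp [h])
    -- rank-nullity
    have hsurj : Function.Surjective φ := by
      intro y
      exact ⟨(y / φ e) • e, by rw [map_smul, smul_eq_mul, div_mul_cancel₀ y hφe]⟩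
    have hrange : LinearMap.range φ = ⊤ := LinearMap.range_eq_top.mpr hsurj
    have hker : Module.finrank K (LinearMap.ker φ) = m := by
      have h1 := LinearMap.finrank_range_add_finrank_ker φ
      rw [hrange] at h1
      rw [finrank_top] at h1
      simp [Module.finrank_fin_fun] at h1
      omega
    set W := LinearMap.ker φ with hWdef
    let f : Module.Basis (Fin m) K W := Module.finBasisOfFinrankEq K W hker
    set g : Fin (m + 1) → (Fin (m + 1) → K) := Fin.cons e (fun i => (f i : Fin (m + 1) → K)) with hgdef
    have heW : e ∉ W := by
      intro h
      exact hφe (LinearMap.mem_ker.mp h)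
    have hli : LinearIndependent K g := by
      rw [hgdef, linearIndependent_fin_cons]
      constructor
      · exact f.linearIndependent.map' W.subtype (Submodule.ker_subtype W)
      · intro h
        apply heW
        have hsub : Submodule.span K (Set.range fun i => (f i : Fin (m + 1) → K)) ≤ W := by
          rw [Submodule.span_le]
          rintro _ ⟨i, rfl⟩
          exact (f i).2
        exact hsub h
    have hcard : Fintype.card (Fin (m + 1)) = Module.finrank K (Fin (m + 1) → K) := by
      simp [Module.finrank_fin_fun]
    let b := basisOfLinearIndependentOfCardEqFinrank hli hcard
    have hb : ⇑b = g := coe_basisOfLinearIndependentOfCardEqFinrank hli hcard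
    refine ⟨b, ?_, ?_⟩
    · rw [hb, hgdef]; exact Fin.cons_zero _ _
    · intro i hi
      obtain ⟨j, rfl⟩ := Fin.exists_succ_eq.mpr hi
      have : b j.succ ∈ W := by
        rw [hb, hgdef, Fin.cons_succ]
        exact (f j).2
      exact LinearMap.mem_ker.mp this
  refine ⟨key, ?_⟩
  -- Part 2
  have he : (Pi.single 0 1 : Fin (m + 1) → K) ≠ 0 := by
    intro h
    have := congrFun h 0
    simp at this
  obtain ⟨b, hb0, hbker⟩ := key (Pi.single 0 1) he
  set e : Fin (m + 1) → K := Pi.single 0 1 with hedef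
  set Q : Matrix (Fin (m + 1)) (Fin (m + 1)) K := Matrix.of (fun i j => b i j) with hQdef
  set c := Pi.basisFun K (Fin (m + 1)) with hcdef
  have hQeq : Q = (c.toMatrix ⇑b)ᵀ := by
    ext i j
    simp [hQdef, hcdef, Module.Basis.toMatrix_apply]
  have hQunit : IsUnit Q := by
    rw [Matrix.isUnit_iff_isUnit_det, hQeq, Matrix.det_transpose,
      ← Matrix.isUnit_iff_isUnit_det]
    haveI := c.invertibleToMatrix b
    exact isUnit_of_invertible _
  have hent : ∀ i j, (Q * P * Qᵀ) i j = b i ⬝ᵥ P.mulVec (b j) := by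
    intro i j
    simp only [Matrix.mul_apply, Matrix.transpose_apply, Matrix.mulVec, dotProduct,
      hQdef, Matrix.of_apply, Finset.sum_mul, Finset.mul_sum]
    rw [Finset.sum_comm]
    exact Finset.sum_congr rfl fun k _ => Finset.sum_congr rfl fun l _ => by ring
  have hquad : ∀ Y : Fin (m + 1) → K,
      Y ⬝ᵥ (Q * P * Qᵀ).mulVec Y = (Qᵀ.mulVec Y) ⬝ᵥ P.mulVec (Qᵀ.mulVec Y) := by
    intro Y
    rw [← Matrix.mulVec_mulVec, ← Matrix.mulVec_mulVec, Matrix.dotProduct_mulVec,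
      ← Matrix.mulVec_transpose]
  have hQT : IsUnit Qᵀ := by
    rw [Matrix.isUnit_iff_isUnit_det, Matrix.det_transpose, ← Matrix.isUnit_iff_isUnit_det]
    exact hQunit
  have hQTinj : Function.Injective (Qᵀ.mulVec) := by
    haveI := (Matrix.isUnit_iff_isUnit_det _).mp hQT
    haveI := Matrix.invertibleOfIsUnitDet Qᵀ this
    intro x y hxy
    have := congrArg ((Qᵀ)⁻¹.mulVec) hxy
    rwa [Matrix.mulVec_mulVec, Matrix.mulVec_mulVec, Matrix.nonsing_inv_mul _ ‹IsUnit Qᵀ.det›,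
      Matrix.one_mulVec, Matrix.one_mulVec] at this
  have hZiso : ∀ X : Fin m → K, X ≠ 0 →
      X ⬝ᵥ ((Q * P * Qᵀ).submatrix Fin.succ Fin.succ).mulVec X ≠ 0 := by
    intro X hX
    set Y : Fin (m + 1) → K := Fin.cons 0 X with hYdef
    have hY : Y ≠ 0 := by
      intro h
      apply hX
      funext i
      have := congrFun h i.succ
      simpa [hYdef] using this
    have hXY : X ⬝ᵥ ((Q * P * Qᵀ).submatrix Fin.succ Fin.succ).mulVec X
        = Y ⬝ᵥ (Q * P * Qᵀ).mulVec Y := by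
      simp [dotProduct, Matrix.mulVec, Fin.sum_univ_succ, hYdef]
    rw [hXY, hquad]
    apply hiso
    intro h
    apply hY
    have : Qᵀ.mulVec Y = Qᵀ.mulVec 0 := by rw [h, Matrix.mulVec_zero]
    exact hQTinj this
  have hZunit : IsUnit ((Q * P * Qᵀ).submatrix Fin.succ Fin.succ) := by
    rw [Matrix.isUnit_iff_isUnit_det, isUnit_iff_ne_zero]
    intro hdet
    obtain ⟨v, hv, hv0⟩ := (Matrix.exists_mulVec_eq_zero_iff).mpr hdet
    exact hZiso v hv (by rw [hv0, dotProduct_zero])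
  refine ⟨Q, hQunit, ?_, ?_, hZunit, hZiso⟩
  · rw [hent 0 0, hb0]
    exact hiso e he
  · intro j
    rw [hent 0 j.succ, hb0]
    exact hbker j.succ (Fin.succ_ne_zero j)
end

section
/- Let P ∈ GL_s(K) be non-isotropic with s ≥ 2 and K a field. Then there exists Q ∈ GL_s(K) such that Q P Q^T has the block form [[α', 0],[*, Z']] with α' ≠ 0 and Z' ∈ GL_{s-1}(K), and such that Q^T e₁ is linearly independent from e₁, where e₁ is the first standard basis vector. -/
open Matrix

theorem stmt_16 {K : Type*} [Field K] {m : ℕ} (hm : 1 ≤ m)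
    (P : Matrix (Fin (m + 1)) (Fin (m + 1)) K) (hP : IsUnit P)
    (hiso : ∀ X : Fin (m + 1) → K, X ≠ 0 → X ⬝ᵥ P.mulVec X ≠ 0) :
    ∃ Q : Matrix (Fin (m + 1)) (Fin (m + 1)) K, IsUnit Q ∧
      (Q * P * Qᵀ) 0 0 ≠ 0 ∧
      (∀ j : Fin m, (Q * P * Qᵀ) 0 j.succ = 0) ∧
      IsUnit ((Q * P * Qᵀ).submatrix Fin.succ Fin.succ) ∧
      ¬ ∃ c : K, Qᵀ.mulVec (Pi.single (0 : Fin (m + 1)) (1 : K))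
          = c • (Pi.single (0 : Fin (m + 1)) (1 : K) : Fin (m + 1) → K) := by
  classical
  -- the vector v = e₀ + e₁
  set v : Fin (m + 1) → K := Pi.single 0 1 + Pi.single 1 1 with hv
  have h10 : (1 : Fin (m + 1)) ≠ 0 := by
    intro h
    rw [Fin.one_eq_zero_iff] at h
    omega
  have hv0 : v 0 = 1 := by simp [hv, Pi.single_apply, h10]
  have hv1 : v 1 = 1 := by simp [hv, Pi.single_apply, h10]
  have hvne : v ≠ 0 := by
    intro h
    have := congrFun h 0
    rw [hv0] at this
    simp at this
  have hvP : v ⬝ᵥ P.mulVec v ≠ 0 := hiso v hvne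
  -- the linear functional f w = v ⬝ᵥ P w
  set f : (Fin (m + 1) → K) →ₗ[K] K :=
    { toFun := fun w => v ⬝ᵥ P.mulVec w
      map_add' := by intro x y; simp [Matrix.mulVec_add, dotProduct_add]
      map_smul' := by intro c x; simp [Matrix.mulVec_smul, dotProduct_smul] } with hf
  have hfv : f v ≠ 0 := hvP
  -- the kernel has dimension m
  have hsurj : Function.Surjective f := by
    intro c
    exact ⟨(c / f v) • v, by
      rw [_root_.map_smul, smul_eq_mul]
      field_simp⟩
  have hrank : Module.finrank K (LinearMap.ker f) = m := by
    have h1 := LinearMap.finrank_range_add_finrank_ker f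
    rw [LinearMap.range_eq_top.mpr hsurj] at h1
    simp [Module.finrank_self, Module.finrank_fintype_fun_eq_card] at h1
    omega
  set W := LinearMap.ker f with hW
  let bW : Module.Basis (Fin m) K W := Module.finBasisOfFinrankEq K W hrank
  have hli : ∀ (c : K), ∀ x ∈ W, c • v + x = 0 → c = 0 := by
    intro c x hx h
    have hx0 : f x = 0 := hx
    have h2 : c * f v + f x = 0 := by
      have := congrArg f h
      rwa [map_add, _root_.map_smul, smul_eq_mul, map_zero] at this
    rw [hx0, add_zero] at h2
    rcases mul_eq_zero.mp h2 with h' | h'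
    · exact h'
    · exact absurd h' hfv
  have hsp : ∀ z : (Fin (m + 1) → K), ∃ c : K, z + c • v ∈ W := by
    intro z
    refine ⟨-(f z / f v), ?_⟩
    rw [LinearMap.mem_ker]
    rw [map_add, _root_.map_smul, smul_eq_mul]
    field_simp
    ring
  let B : Module.Basis (Fin (m + 1)) K (Fin (m + 1) → K) := Module.Basis.mkFinCons v bW hli hsp
  have hB : (B : Fin (m + 1) → (Fin (m + 1) → K)) = Fin.cons v ((↑) ∘ bW) :=
    Module.Basis.coe_mkFinCons v bW hli hsp
  have hB0 : B 0 = v := by rw [hB]; rfl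
  have hBsucc : ∀ i : Fin m, (B i.succ : Fin (m + 1) → K) ∈ W := by
    intro i
    have : B i.succ = (bW i : Fin (m + 1) → K) := by rw [hB]; simp
    rw [this]; exact (bW i).2
  -- the matrix Q whose rows are the basis vectors
  set Q : Matrix (Fin (m + 1)) (Fin (m + 1)) K :=
    ((Pi.basisFun K (Fin (m + 1))).toMatrix B)ᵀ with hQ
  have hQentry : ∀ i j, Q i j = B i j := by
    intro i j
    simp [hQ, Module.Basis.toMatrix_apply]
  have hQunit : IsUnit Q := by
    have := (Pi.basisFun K (Fin (m + 1))).invertibleToMatrix B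
    rw [hQ]
    rw [Matrix.isUnit_iff_isUnit_det, Matrix.det_transpose, ← Matrix.isUnit_iff_isUnit_det]
    exact isUnit_of_invertible _
  -- entries of Q P Qᵀ
  have hM : ∀ i j, (Q * P * Qᵀ) i j = (B i) ⬝ᵥ P.mulVec (B j) := by
    intro i j
    simp only [Matrix.mul_apply, Matrix.transpose_apply, dotProduct, Matrix.mulVec,
      Finset.sum_mul, Finset.mul_sum, hQentry]
    rw [Finset.sum_comm]
    apply Finset.sum_congr rfl
    intro k _
    apply Finset.sum_congr rfl
    intro l _
    ring
  have hM00 : (Q * P * Qᵀ) 0 0 ≠ 0 := by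
    rw [hM, hB0]; exact hvP
  have hM0succ : ∀ j : Fin m, (Q * P * Qᵀ) 0 j.succ = 0 := by
    intro j
    rw [hM, hB0]
    exact LinearMap.mem_ker.mp (hBsucc j)
  refine ⟨Q, hQunit, hM00, hM0succ, ?_, ?_⟩
  · -- submatrix is a unit
    have hMunit : IsUnit (Q * P * Qᵀ) := by
      refine (hQunit.mul hP).mul ?_
      rw [Matrix.isUnit_iff_isUnit_det, Matrix.det_transpose,
        ← Matrix.isUnit_iff_isUnit_det]
      exact hQunit
    have hdet : (Q * P * Qᵀ).det =
        (Q * P * Qᵀ) 0 0 * ((Q * P * Qᵀ).submatrix Fin.succ Fin.succ).det := by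
      rw [Matrix.det_succ_row_zero]
      rw [Fintype.sum_eq_single (0 : Fin (m + 1))]
      · simp [Fin.zero_succAbove]
      · intro j hj
        rcases Fin.eq_zero_or_eq_succ j with rfl | ⟨k, rfl⟩
        · exact absurd rfl hj
        · rw [hM0succ k]; ring
    rw [Matrix.isUnit_iff_isUnit_det, hdet, isUnit_iff_ne_zero] at hMunit
    rw [Matrix.isUnit_iff_isUnit_det, isUnit_iff_ne_zero]
    intro h
    exact hMunit (by rw [h, mul_zero])
  · -- Qᵀ e₀ is not a multiple of e₀
    rintro ⟨c, hc⟩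
    have h1 : Qᵀ.mulVec (Pi.single (0 : Fin (m + 1)) (1 : K)) 1 = Q 0 1 := by
      simp [Matrix.mulVec, dotProduct, Pi.single_apply]
    have h2 := congrFun hc 1
    rw [h1, hQentry, hB0, hv1] at h2
    simp [Pi.single_apply, h10] at h2
end

section
/- Let W be an affine subspace of invertible matrices in M_n(K) of dimension n(n-1)/2 with n ≥ 2, and let V be an affine subspace of M_{n+1}(K) such that: (i) every matrix of V has rank at least n; (ii) for every M ∈ W and all L ∈ M_{1,n}(K), C ∈ M_{n,1}(K), the matrix [[M, C],[L, 0]] belongs to V; (iii) V contains a matrix whose (n+1, n+1) entry is 1. Then the translation vector space of V contains the matrix with 1 in position (n+1, n+1) and 0 elsewhere. -/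
set_option maxHeartbeats 1000000
set_option synthInstance.maxHeartbeats 400000

open Matrix Module

universe u v

section Aux

variable {K : Type u} [Field K]


lemma cover_two {E : Type v} [AddCommGroup E] [Module K E]
    (H₁ H₂ : Submodule K E) (h1 : H₁ ≠ ⊤) (h2 : H₂ ≠ ⊤) :
    ∃ x, x ∉ H₁ ∧ x ∉ H₂ := by
  obtain ⟨x, hx⟩ : ∃ x, x ∉ H₁ := by
    by_contra hc; push_neg at hc
    exact h1 (Submodule.eq_top_iff'.2 hc)
  obtain ⟨y, hy⟩ : ∃ y, y ∉ H₂ := by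
    by_contra hc; push_neg at hc
    exact h2 (Submodule.eq_top_iff'.2 hc)
  by_cases hxy : x ∉ H₂
  · exact ⟨x, hx, hxy⟩
  by_cases hyx : y ∉ H₁
  · exact ⟨y, hyx, hy⟩
  push_neg at hxy hyx
  refine ⟨x + y, fun h => hx ?_, fun h => hy ?_⟩
  · simpa using H₁.sub_mem h hyx
  · have : (x + y) - x ∈ H₂ := H₂.sub_mem h hxy
    simpa using this

open Classical in
lemma lemB : ∀ (n : ℕ) (E : Type v) [AddCommGroup E] [Module K E] [FiniteDimensional K E],
    2 ≤ n → Module.finrank K E = n → ∀ (H : Submodule K E), H ≠ ⊤ →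
    ∀ (g : E → (E →ₗ[K] K)),
    (∀ v, v ∉ H → g v ≠ 0) → (∀ v, v ∉ H → g v v = 0) →
    (∀ v w, v ∉ H → w ∉ H → (∀ c : K, w ≠ c • v) → g v w = 0 ∨ g w v = 0) →
    False := by
  intro n
  induction n using Nat.strong_induction_on with
  | _ n IH =>
    intro E _ _ _ hn hE H hH g hg0 hgv hpair
    obtain ⟨v₀, hv₀⟩ : ∃ v, v ∉ H := by
      by_contra hc; push_neg at hc; exact hH (Submodule.eq_top_iff'.2 hc)
    have hv₀0 : v₀ ≠ 0 := fun h => hv₀ (h ▸ H.zero_mem)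
    rcases eq_or_lt_of_le hn with h2 | h3
    · -- base case n = 2
      obtain ⟨w, hwH, hwv⟩ := cover_two H (LinearMap.ker (g v₀)) hH
        (by simpa [LinearMap.ker_eq_top] using hg0 v₀ hv₀)
      have hwv' : g v₀ w ≠ 0 := fun h => hwv (LinearMap.mem_ker.2 h)
      have hindep : ∀ c : K, w ≠ c • v₀ := by
        intro c hc
        apply hwv'
        rw [hc, _root_.map_smul, hgv v₀ hv₀, smul_eq_mul, mul_zero]
      rcases hpair v₀ w hv₀ hwH hindep with h | h
      · exact hwv' h
      -- g w kills v₀ and w, so g w = 0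
      have li : LinearIndependent K ![v₀, w] :=
        (LinearIndependent.pair_iff' hv₀0).2 (fun a ha => hindep a ha.symm)
      have hsp : Submodule.span K (Set.range ![v₀, w]) = ⊤ := by
        apply Submodule.eq_top_of_finrank_eq
        rw [finrank_span_eq_card li, hE, ← h2]
        simp
      apply hg0 w hwH
      ext x
      have hx : x ∈ Submodule.span K (Set.range ![v₀, w]) := hsp ▸ Submodule.mem_top
      have hrange : Set.range ![v₀, w] = {v₀, w} := by
        ext z; simp [Fin.exists_fin_two]; tauto
      rw [hrange] at hx
      obtain ⟨a, b, hab⟩ := Submodule.mem_span_pair.1 hx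
      rw [← hab]
      simp [h, hgv w hwH]
    · -- inductive step n ≥ 3
      set g₀ := g v₀ with hg₀def
      have hg₀ : g₀ ≠ 0 := hg0 v₀ hv₀
      set p : Submodule K E := Submodule.span K {v₀} with hpdef
      have hpker : p ≤ LinearMap.ker g₀ := by
        rw [hpdef, Submodule.span_le, Set.singleton_subset_iff]
        exact LinearMap.mem_ker.2 (hgv v₀ hv₀)
      set π := p.mkQ with hπdef
      have hπv₀ : π v₀ = 0 := by
        rw [hπdef, Submodule.mkQ_apply, Submodule.Quotient.mk_eq_zero]
        exact Submodule.subset_span rfl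
      set H' : Submodule K (E ⧸ p) := (LinearMap.ker g₀).map π with hH'def
      have hH' : H' ≠ ⊤ := by
        intro heq
        apply hg₀
        rw [← LinearMap.ker_eq_top]
        rw [Submodule.eq_top_iff']
        intro x
        have hx : π x ∈ H' := heq ▸ Submodule.mem_top
        obtain ⟨k, hk, hkx⟩ := hx
        have : x - k ∈ p := by
          rw [← Submodule.Quotient.mk_eq_zero p]
          have : π (x - k) = 0 := by rw [_root_.map_sub, hkx, sub_self]
          simpa [hπdef] using this
        have := hpker this
        have : (x - k) + k ∈ LinearMap.ker g₀ := Submodule.add_mem _ this hk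
        simpa using this
      have hQrank : Module.finrank K (E ⧸ p) = n - 1 := by
        have h1 := Submodule.finrank_quotient_add_finrank p
        rw [hE, finrank_span_singleton hv₀0] at h1
        omega
      have hkerlift : ∀ u' : E ⧸ p, u' ∉ H' → ∀ u : E, π u = u' → g₀ u ≠ 0 := by
        intro u' hu' u hu h0
        exact hu' ⟨u, LinearMap.mem_ker.2 h0, hu⟩
      have hlift : ∀ u' : E ⧸ p, u' ∉ H' → ∃ u : E, π u = u' ∧ u ∉ H ∧ g₀ u ≠ 0 := by
        intro u' hu'
        obtain ⟨u₁, hu₁⟩ := Submodule.Quotient.mk_surjective p u'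
        have hu₁' : π u₁ = u' := hu₁
        by_cases h1 : u₁ ∈ H
        · refine ⟨u₁ + v₀, ?_, ?_, ?_⟩
          · rw [_root_.map_add, hπv₀, hu₁', add_zero]
          · intro hmem
            exact hv₀ (by simpa using H.sub_mem hmem h1)
          · exact hkerlift u' hu' _ (by rw [_root_.map_add, hπv₀, hu₁', add_zero])
        · exact ⟨u₁, hu₁', h1, hkerlift u' hu' _ hu₁'⟩
      choose lift hl1 hl2 hl3 using hlift
      have hindep₀ : ∀ (u' : E ⧸ p) (h : u' ∉ H'), ∀ c : K, lift u' h ≠ c • v₀ := by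
        intro u' h c hc
        apply hl3 u' h
        rw [hc, _root_.map_smul, hgv v₀ hv₀, smul_eq_mul, mul_zero]
      have hguv₀ : ∀ (u' : E ⧸ p) (h : u' ∉ H'), g (lift u' h) v₀ = 0 := by
        intro u' h
        rcases hpair v₀ (lift u' h) hv₀ (hl2 u' h) (hindep₀ u' h) with hc | hc
        · exact absurd hc (hl3 u' h)
        · exact hc
      set G : (E ⧸ p) → ((E ⧸ p) →ₗ[K] K) := fun u' =>
        if h : u' ∉ H' then p.liftQ (g (lift u' h))
          (by rw [hpdef, Submodule.span_le, Set.singleton_subset_iff]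
              exact LinearMap.mem_ker.2 (hguv₀ u' h)) else 0 with hGdef
      have hGapp : ∀ (u' : E ⧸ p) (h : u' ∉ H') (x : E), G u' (π x) = g (lift u' h) x := by
        intro u' h x
        rw [hGdef]
        simp only [dif_pos h]
        exact Submodule.liftQ_apply p _ x
      refine IH (n-1) (by omega) (E ⧸ p) (by omega) hQrank H' hH' G ?_ ?_ ?_
      · intro u' hu' h0
        apply hg0 (lift u' hu') (hl2 u' hu')
        ext x
        have := hGapp u' hu' x
        rw [h0] at this
        simpa using this.symm
      · intro u' hu'
        have : G u' (π (lift u' hu')) = g (lift u' hu') (lift u' hu') := hGapp u' hu' _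
        rw [hl1 u' hu'] at this
        rw [this]
        exact hgv _ (hl2 u' hu')
      · intro u' w' hu' hw' hind
        have hindE : ∀ c : K, lift w' hw' ≠ c • lift u' hu' := by
          intro c hc
          apply hind c
          rw [← hl1 w' hw', ← hl1 u' hu', hc, _root_.map_smul]
        rcases hpair _ _ (hl2 u' hu') (hl2 w' hw') hindE with hc | hc
        · left
          have := hGapp u' hu' (lift w' hw')
          rw [hl1 w' hw'] at this
          rw [this]; exact hc
        · right
          have := hGapp w' hw' (lift u' hu')
          rw [hl1 u' hu'] at this
          rw [this]; exact hc



open Classical in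
lemma quinlan : ∀ (n : ℕ) (E : Type v) [AddCommGroup E] [Module K E] [FiniteDimensional K E],
    Module.finrank K E = n → ∀ V : Submodule K (E →ₗ[K] E),
    (∀ f ∈ V, ∀ c : K, c ≠ 0 → ∀ x : E, f x = c • x → x = 0) →
    Module.finrank K V ≤ n * (n-1) / 2 := by
  intro n
  induction n using Nat.strong_induction_on with
  | _ n IH =>
    intro E _ _ _ hE V hgood
    by_cases hn : n ≤ 1
    · have hbot : V = ⊥ := by
        rw [Submodule.eq_bot_iff]
        intro f hf
        ext x
        by_cases hx : x = 0
        · simp [hx]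
        · have hnt : Nontrivial E := nontrivial_of_ne x 0 hx
          have h1 : Module.finrank K E = 1 := by
            have := Module.finrank_pos (R := K) (M := E)
            omega
          have hspan : Submodule.span K {x} = ⊤ := by
            apply Submodule.eq_top_of_finrank_eq
            rw [finrank_span_singleton hx, h1]
          have : f x ∈ Submodule.span K {x} := hspan ▸ Submodule.mem_top
          obtain ⟨c, hc⟩ := Submodule.mem_span_singleton.1 this
          by_cases hc0 : c = 0
          · rw [← hc, hc0]; simp
          · exact absurd (hgood f hf c hc0 x hc.symm) hx
      rw [hbot]
      simp
    · push_neg at hn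
      have hn2 : 2 ≤ n := hn
      have hnt : Nontrivial E := by
        apply Module.nontrivial_of_finrank_pos (R := K)
        omega
      -- Lemma A: there is a direction carrying no rank-one map of V
      have hA : ∃ v₀ : E, v₀ ≠ 0 ∧ ∀ g : E →ₗ[K] K, g.smulRight v₀ ∈ V → g = 0 := by
        by_contra hc
        push_neg at hc
        have hfam : ∀ v : E, v ∉ (⊥ : Submodule K E) →
            ∃ g : E →ₗ[K] K, g.smulRight v ∈ V ∧ g ≠ 0 := by
          intro v hv
          obtain ⟨g, hg1, hg2⟩ := hc v (by simpa using hv)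
          exact ⟨g, hg1, hg2⟩
        set g : E → (E →ₗ[K] K) := fun v =>
          if h : v ∉ (⊥ : Submodule K E) then (hfam v h).choose else 0 with hgdef
        have hmemV : ∀ v, v ∉ (⊥ : Submodule K E) → (g v).smulRight v ∈ V ∧ g v ≠ 0 := by
          intro v hv
          rw [hgdef]; simp only [dif_pos hv]
          exact (hfam v hv).choose_spec
        have hgv : ∀ v, v ∉ (⊥ : Submodule K E) → g v v = 0 := by
          intro v hv
          by_contra hzz
          have : v = 0 := hgood _ (hmemV v hv).1 (g v v) hzz v (by simp)
          exact hv (by simpa using this)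
        refine lemB n E hn2 hE ⊥ bot_ne_top g (fun v hv => (hmemV v hv).2) hgv ?_
        intro v w hv hw hind
        by_contra hboth
        push_neg at hboth
        obtain ⟨hα, hβ⟩ := hboth
        set α := g v w with hαdef
        set β := g w v with hβdef
        have hfV : (g v).smulRight v + (α*β)⁻¹ • ((g w).smulRight w) ∈ V :=
          V.add_mem (hmemV v hv).1 (V.smul_mem _ (hmemV w hw).1)
        set u := v + α⁻¹ • w with hudef
        have hu0 : u ≠ 0 := by
          intro h0
          apply hind (-α)
          have h1 : α • (v + α⁻¹ • w) = 0 := by rw [← hudef, h0, smul_zero]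
          rw [smul_add, smul_smul, mul_inv_cancel₀ hα, one_smul] at h1
          rw [neg_smul]
          exact eq_neg_of_add_eq_zero_right h1
        have hgvu : g v u = 1 := by
          rw [hudef, _root_.map_add, _root_.map_smul, hgv v hv, smul_eq_mul, ← hαdef,
            inv_mul_cancel₀ hα, zero_add]
        have hgwu : g w u = β := by
          rw [hudef, _root_.map_add, _root_.map_smul, hgv w hw, ← hβdef, smul_zero, add_zero]
        have hfu : ((g v).smulRight v + (α*β)⁻¹ • ((g w).smulRight w)) u = (1:K) • u := by
          simp only [LinearMap.add_apply, LinearMap.smul_apply, LinearMap.smulRight_apply,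
            hgvu, hgwu, one_smul, smul_smul]
          rw [hudef]
          congr 1
          congr 1
          field_simp
        exact hu0 (hgood _ hfV 1 one_ne_zero u hfu)
      obtain ⟨v₀, hv₀0, hA⟩ := hA
      set p : Submodule K E := Submodule.span K {v₀} with hpdef
      set π := p.mkQ with hπdef
      have hπv₀ : π v₀ = 0 := by
        rw [hπdef, Submodule.mkQ_apply, Submodule.Quotient.mk_eq_zero]
        exact Submodule.subset_span rfl
      have hQrank : Module.finrank K (E ⧸ p) = n - 1 := by
        have h1 := Submodule.finrank_quotient_add_finrank p
        have h2 : Module.finrank K p = 1 := by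
          rw [hpdef]; exact finrank_span_singleton hv₀0
        rw [hE, h2] at h1
        omega
      -- evaluation map
      set φ : V →ₗ[K] E :=
        { toFun := fun f => (f : E →ₗ[K] E) v₀
          map_add' := by intros; simp
          map_smul' := by intros; simp } with hφdef
      have hφapp : ∀ f : V, φ f = (f : E →ₗ[K] E) v₀ := fun f => rfl
      have hrange : LinearMap.range φ ≠ ⊤ := by
        intro heq
        have : v₀ ∈ LinearMap.range φ := heq ▸ Submodule.mem_top
        obtain ⟨f, hf⟩ := this
        have : v₀ = 0 := by
          apply hgood (f : E →ₗ[K] E) f.2 1 one_ne_zero v₀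
          rw [one_smul, ← hφapp, hf]
        exact hv₀0 this
      have hr1 : Module.finrank K (LinearMap.range φ) ≤ n - 1 := by
        have := Submodule.finrank_lt (K := K) (V := E) hrange
        omega
      -- the kernel maps to endomorphisms of the quotient
      set W := LinearMap.ker φ with hWdef
      have hWv₀ : ∀ f : W, ((f : V) : E →ₗ[K] E) v₀ = 0 := by
        intro f
        have h2 : φ (f : V) = 0 := LinearMap.mem_ker.1 f.2
        rw [← hφapp]
        exact h2
      have hcomap : ∀ f : W, p ≤ p.comap ((f : V) : E →ₗ[K] E) := by
        intro f
        rw [hpdef, Submodule.span_le, Set.singleton_subset_iff, SetLike.mem_coe,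
          Submodule.mem_comap, hWv₀ f]
        exact Submodule.zero_mem _
      set ψ : W →ₗ[K] ((E ⧸ p) →ₗ[K] (E ⧸ p)) :=
        { toFun := fun f => Submodule.mapQ p p ((f : V) : E →ₗ[K] E) (hcomap f)
          map_add' := by
            intro a b
            apply Submodule.linearMap_qext
            ext x
            simp [Submodule.mapQ_apply]
          map_smul' := by
            intro c a
            apply Submodule.linearMap_qext
            ext x
            simp [Submodule.mapQ_apply] } with hψdef
      have hψapp : ∀ (f : W) (x : E), ψ f (π x) = π (((f : V) : E →ₗ[K] E) x) := by
        intro f x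
        exact Submodule.mapQ_apply p p (h := hcomap f) _ x
      -- ψ is injective
      have hkerψ : LinearMap.ker ψ = ⊥ := by
        rw [LinearMap.ker_eq_bot']
        intro f hf
        obtain ⟨φ₀, hφ₀⟩ : ∃ φ₀ : Module.Dual K E, φ₀ v₀ ≠ 0 := by
          by_contra hcon
          push_neg at hcon
          exact hv₀0 ((Module.forall_dual_apply_eq_zero_iff K v₀).1 hcon)
        set h₁ : E →ₗ[K] K := (φ₀ v₀)⁻¹ • φ₀ with hh₁def
        have hh₁ : h₁ v₀ = 1 := by
          rw [hh₁def]; simp [inv_mul_cancel₀ hφ₀]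
        have hmem : ∀ x : E, ((f : V) : E →ₗ[K] E) x ∈ p := by
          intro x
          have : ψ f (π x) = 0 := by rw [hf]; simp
          rw [hψapp] at this
          rw [hπdef, Submodule.mkQ_apply, Submodule.Quotient.mk_eq_zero] at this
          exact this
        set gg : E →ₗ[K] K := h₁.comp ((f : V) : E →ₗ[K] E) with hggdef
        have hsm : ((f : V) : E →ₗ[K] E) = gg.smulRight v₀ := by
          ext x
          obtain ⟨c, hc⟩ := Submodule.mem_span_singleton.1 (hpdef ▸ hmem x)
          rw [LinearMap.smulRight_apply, hggdef, LinearMap.comp_apply, ← hc,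
            _root_.map_smul, hh₁, smul_eq_mul, mul_one]
        have hgg0 : gg = 0 := hA gg (by rw [← hsm]; exact (f : V).2)
        have : ((f : V) : E →ₗ[K] E) = 0 := by rw [hsm, hgg0]; simp
        exact Subtype.ext (Subtype.ext this)
      have hfrW : Module.finrank K W = Module.finrank K (LinearMap.range ψ) :=
        (LinearEquiv.ofInjective ψ (by
          rw [injective_iff_map_eq_zero]
          intro a ha
          have hmk : a ∈ LinearMap.ker ψ := LinearMap.mem_ker.2 ha
          rw [hkerψ] at hmk
          exact (Submodule.mem_bot K).1 hmk)).finrank_eq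
      -- the image is a good space on the quotient
      have hgood₁ : ∀ f' ∈ LinearMap.range ψ, ∀ c : K, c ≠ 0 →
          ∀ x' : E ⧸ p, f' x' = c • x' → x' = 0 := by
        rintro f' ⟨f, rfl⟩ c hc x' hx'
        obtain ⟨x, rfl⟩ := Submodule.Quotient.mk_surjective p x'
        rw [← Submodule.mkQ_apply, ← hπdef] at hx' ⊢
        rw [hψapp] at hx'
        have : π (((f : V) : E →ₗ[K] E) x - c • x) = 0 := by
          rw [_root_.map_sub, hx', _root_.map_smul]
          simp
        rw [hπdef, Submodule.mkQ_apply, Submodule.Quotient.mk_eq_zero] at this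
        obtain ⟨t, ht⟩ := Submodule.mem_span_singleton.1 (hpdef ▸ this)
        set y := x + (c⁻¹ * t) • v₀ with hydef
        have hfy : ((f : V) : E →ₗ[K] E) y = c • y := by
          rw [hydef, _root_.map_add, _root_.map_smul, hWv₀ f, smul_zero, add_zero]
          have hfx : ((f : V) : E →ₗ[K] E) x = c • x + t • v₀ := by
            rw [ht]; abel
          rw [hfx, smul_add, smul_smul, ← mul_assoc, mul_inv_cancel₀ hc, one_mul]
        have hy0 : y = 0 := hgood _ ((f : V)).2 c hc y hfy
        rw [hydef] at hy0
        have : π (x + (c⁻¹ * t) • v₀) = 0 := by rw [hy0]; simp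
        rw [_root_.map_add, _root_.map_smul, hπv₀, smul_zero, add_zero] at this
        exact this
      -- conclude
      have hWr : Module.finrank K (LinearMap.range ψ) ≤ (n-1) * ((n-1) - 1) / 2 :=
        IH (n-1) (by omega) (E ⧸ p) hQrank (LinearMap.range ψ) hgood₁
      have htot := LinearMap.finrank_range_add_finrank_ker φ
      have hVfr : Module.finrank K V = Module.finrank K (LinearMap.range φ) + Module.finrank K W := by
        rw [hWdef]; omega
      have harith : (n - 1) + (n-1) * ((n-1) - 1) / 2 = n * (n - 1) / 2 := by
        rw [← Nat.choose_two_right, ← Nat.choose_two_right]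
        obtain ⟨m, rfl⟩ : ∃ m, n = m + 1 := ⟨n - 1, by omega⟩
        simp only [Nat.add_sub_cancel]
        rw [Nat.choose_succ_succ]
        simp [Nat.choose_one_right]
      omega



lemma good_matrix_bound {n : ℕ} (Aw : Matrix (Fin n) (Fin n) K)
    (T : Submodule K (Matrix (Fin n) (Fin n) K))
    (hgood : ∀ B ∈ T, IsUnit (Aw + B)) :
    Module.finrank K T ≤ n * (n-1) / 2 := by
  have hAw : IsUnit Aw := by simpa using hgood 0 T.zero_mem
  have hdet : IsUnit Aw.det := (Matrix.isUnit_iff_isUnit_det Aw).1 hAw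
  set e₁ : Matrix (Fin n) (Fin n) K ≃ₗ[K] Matrix (Fin n) (Fin n) K :=
    LinearEquiv.ofLinear (LinearMap.mulLeft K Aw⁻¹) (LinearMap.mulLeft K Aw)
      (by
        ext X
        simp [LinearMap.mulLeft_apply, ← Matrix.mul_assoc, Matrix.nonsing_inv_mul Aw hdet])
      (by
        ext X
        simp [LinearMap.mulLeft_apply, ← Matrix.mul_assoc, Matrix.mul_nonsing_inv Aw hdet])
    with he₁def
  have he₁app : ∀ X, e₁ X = Aw⁻¹ * X := fun X => rfl
  set e : Matrix (Fin n) (Fin n) K ≃ₗ[K] ((Fin n → K) →ₗ[K] (Fin n → K)) :=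
    e₁.trans Matrix.toLin' with hedef
  have heapp : ∀ X, (e : Matrix (Fin n) (Fin n) K →ₗ[K] ((Fin n → K) →ₗ[K] (Fin n → K))) X
      = Matrix.toLin' (Aw⁻¹ * X) := fun X => rfl
  set V' : Submodule K ((Fin n → K) →ₗ[K] (Fin n → K)) := T.map (e : _ →ₗ[K] _) with hV'def
  have hfr : Module.finrank K V' = Module.finrank K T := LinearEquiv.finrank_map_eq e T
  have hgood' : ∀ f ∈ V', ∀ c : K, c ≠ 0 → ∀ x : Fin n → K, f x = c • x → x = 0 := by
    rintro f hf c hc x hx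
    obtain ⟨B, hB, rfl⟩ := Submodule.mem_map.1 hf
    by_contra hx0
    rw [heapp, Matrix.toLin'_apply] at hx
    have hBx : B *ᵥ x = c • (Aw *ᵥ x) := by
      have h1 : Aw *ᵥ ((Aw⁻¹ * B) *ᵥ x) = B *ᵥ x := by
        rw [Matrix.mulVec_mulVec, ← Matrix.mul_assoc, Matrix.mul_nonsing_inv Aw hdet,
          Matrix.one_mul]
      rw [← h1, hx, Matrix.mulVec_smul]
    have hmem : (-c⁻¹) • B ∈ T := T.smul_mem _ hB
    have hz : (Aw + (-c⁻¹) • B) *ᵥ x = 0 := by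
      rw [Matrix.add_mulVec, Matrix.smul_mulVec, hBx, smul_smul]
      have : (-c⁻¹) * c = -1 := by field_simp
      rw [this, neg_one_smul, add_neg_cancel]
    have hdet0 : (Aw + (-c⁻¹) • B).det = 0 :=
      Matrix.exists_mulVec_eq_zero_iff.1 ⟨x, hx0, hz⟩
    have := (Matrix.isUnit_iff_isUnit_det _).1 (hgood _ hmem)
    rw [hdet0] at this
    simp at this
  have hfrE : Module.finrank K (Fin n → K) = n := by
    rw [Module.finrank_fintype_fun_eq_card, Fintype.card_fin]
  have := quinlan n (Fin n → K) hfrE V' hgood'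
  omega


lemma dot_functional {n : ℕ} (φ : (Fin n → K) →ₗ[K] K) (v : Fin n → K) :
    ∑ j, φ (Pi.single j 1) * v j = φ v := by
  have hv := LinearMap.pi_apply_eq_sum_univ φ v
  rw [hv]
  apply Finset.sum_congr rfl
  intro j _
  rw [smul_eq_mul, mul_comm]
  congr 2
  funext k
  simp [Pi.single_apply, eq_comm]

-- rank obstruction lemma
lemma rank_small {n : ℕ} (hn : 2 ≤ n) (M : Matrix (Fin n) (Fin n) K)
    (lam : K) (hlam : lam ≠ 0) (hM : ¬ IsUnit M) :
    ∃ (L : Matrix Unit (Fin n) K) (C : Matrix (Fin n) Unit K),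
      (Matrix.fromBlocks M C L (lam • (1 : Matrix Unit Unit K))).rank < n := by
  -- get kernel vector
  have hdet0 : M.det = 0 := by
    by_contra h
    exact hM ((Matrix.isUnit_iff_isUnit_det M).2 (isUnit_iff_ne_zero.2 h))
  obtain ⟨x, hx0, hxk⟩ := Matrix.exists_mulVec_eq_zero_iff.2 hdet0
  -- get y outside span {x}
  have hfrE : Module.finrank K (Fin n → K) = n := by
    rw [Module.finrank_fintype_fun_eq_card, Fintype.card_fin]
  obtain ⟨y, hy⟩ : ∃ y : Fin n → K, y ∉ Submodule.span K {x} := by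
    by_contra hcon
    push_neg at hcon
    have : Submodule.span K {x} = ⊤ := Submodule.eq_top_iff'.2 hcon
    have h1 : Module.finrank K (Submodule.span K {x}) = 1 := finrank_span_singleton hx0
    rw [this, finrank_top] at h1
    omega
  -- functional φ with φ x = 0, φ y = 1
  obtain ⟨φ, hφx, hφy⟩ : ∃ φ : (Fin n → K) →ₗ[K] K, φ x = 0 ∧ φ y = 1 := by
    set pq := Submodule.span K {x} with hpq
    have hy' : pq.mkQ y ≠ 0 := by
      rw [Submodule.mkQ_apply, Ne, Submodule.Quotient.mk_eq_zero]
      exact hy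
    obtain ⟨ψ₀, hψ₀⟩ : ∃ ψ₀ : Module.Dual K ((Fin n → K) ⧸ pq), ψ₀ (pq.mkQ y) ≠ 0 := by
      by_contra hcon
      push_neg at hcon
      exact hy' ((Module.forall_dual_apply_eq_zero_iff K _).1 hcon)
    refine ⟨(ψ₀ (pq.mkQ y))⁻¹ • (ψ₀.comp pq.mkQ), ?_, ?_⟩
    · simp only [LinearMap.smul_apply, LinearMap.comp_apply]
      have : pq.mkQ x = 0 := by
        rw [Submodule.mkQ_apply, Submodule.Quotient.mk_eq_zero]
        exact Submodule.subset_span rfl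
      rw [this, _root_.map_zero, smul_zero]
    · simp only [LinearMap.smul_apply, LinearMap.comp_apply, smul_eq_mul]
      exact inv_mul_cancel₀ hψ₀
  set L : Matrix Unit (Fin n) K := Matrix.of (fun _ j => (-lam) * φ (Pi.single j 1)) with hLdef
  set C : Matrix (Fin n) Unit K := Matrix.of (fun i _ => -(M *ᵥ y) i) with hCdef
  refine ⟨L, C, ?_⟩
  set X := Matrix.fromBlocks M C L (lam • (1 : Matrix Unit Unit K)) with hXdef
  have hLdot : ∀ v : Fin n → K, (L *ᵥ v) = fun _ => (-lam) * φ v := by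
    intro v
    funext i
    simp only [Matrix.mulVec, dotProduct, hLdef, Matrix.of_apply, mul_assoc]
    rw [← Finset.mul_sum, dot_functional φ v]
  have hk1 : X *ᵥ (Sum.elim x 0) = 0 := by
    rw [hXdef, Matrix.fromBlocks_mulVec]
    funext i
    rcases i with i | i
    · simp [hxk]
    · simp [hLdot x, hφx]
  have hk2 : X *ᵥ (Sum.elim y (fun _ => (1:K))) = 0 := by
    rw [hXdef, Matrix.fromBlocks_mulVec]
    funext i
    rcases i with i | i
    · simp [Matrix.mulVec, dotProduct, hCdef]
    · simp [Matrix.mulVec, dotProduct, hLdot y, hφy, Matrix.one_apply, hlam]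
  -- linear independence of the two kernel vectors
  have hli : LinearIndependent K
      ![(Sum.elim x 0 : Fin n ⊕ Unit → K), (Sum.elim y (fun _ => (1:K)) : Fin n ⊕ Unit → K)] := by
    rw [LinearIndependent.pair_iff]
    intro s t hst
    have ht : t = 0 := by
      have := congrFun hst (Sum.inr ())
      simpa using this
    subst ht
    obtain ⟨i, hi⟩ : ∃ i, x i ≠ 0 := Function.ne_iff.1 hx0
    have := congrFun hst (Sum.inl i)
    simp at this
    rcases this with h | h
    · exact ⟨h, rfl⟩
    · exact absurd h hi
  have hsple : Submodule.span K (Set.range ![Sum.elim x 0, Sum.elim y (fun _ => (1:K))]) ≤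
      LinearMap.ker X.mulVecLin := by
    rw [Submodule.span_le]
    rintro z ⟨i, rfl⟩
    fin_cases i
    · simpa [Matrix.mulVecLin_apply] using hk1
    · simpa [Matrix.mulVecLin_apply] using hk2
  have hker2 : 2 ≤ Module.finrank K (LinearMap.ker X.mulVecLin) := by
    have h1 := finrank_span_eq_card hli
    have h2 := Submodule.finrank_mono hsple
    rw [h1] at h2
    simpa using h2
  have hrn := LinearMap.finrank_range_add_finrank_ker X.mulVecLin
  have hcard : Module.finrank K ((Fin n ⊕ Unit) → K) = n + 1 := by
    rw [Module.finrank_fintype_fun_eq_card]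
    simp
  rw [hcard] at hrn
  have : X.rank = Module.finrank K (LinearMap.range X.mulVecLin) := rfl
  omega

end Aux




theorem stmt_18 {K : Type*} [Field K] {n : ℕ} (hn : 2 ≤ n)
    (Aw : Matrix (Fin n) (Fin n) K)
    (Sw : Submodule K (Matrix (Fin n) (Fin n) K))
    (hW : ∀ B ∈ Sw, IsUnit (Aw + B))
    (hWd : Module.finrank K Sw = n * (n - 1) / 2)
    (A : Matrix (Fin n ⊕ Unit) (Fin n ⊕ Unit) K)
    (S : Submodule K (Matrix (Fin n ⊕ Unit) (Fin n ⊕ Unit) K))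
    (h1 : ∀ B ∈ S, n ≤ (A + B).rank)
    (h2 : ∀ B ∈ Sw, ∀ (L : Matrix Unit (Fin n) K) (C : Matrix (Fin n) Unit K),
        Matrix.fromBlocks (Aw + B) C L 0 - A ∈ S)
    (h3 : ∃ B ∈ S, (A + B) (Sum.inr ()) (Sum.inr ()) = 1) :
    Matrix.fromBlocks (0 : Matrix (Fin n) (Fin n) K) 0 0
        (1 : Matrix Unit Unit K) ∈ S := by
  classical
  have hP : Matrix.fromBlocks Aw 0 0 0 - A ∈ S := by
    simpa using h2 0 Sw.zero_mem 0 0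
  have hCL : ∀ (L : Matrix Unit (Fin n) K) (C : Matrix (Fin n) Unit K),
      Matrix.fromBlocks 0 C L 0 ∈ S := by
    intro L C
    have h₁ := h2 0 Sw.zero_mem L C
    rw [add_zero] at h₁
    have h₂ := S.sub_mem h₁ hP
    have heq : Matrix.fromBlocks Aw C L 0 - A - (Matrix.fromBlocks Aw 0 0 0 - A)
        = Matrix.fromBlocks 0 C L 0 := by
      ext i j
      rcases i with i | i <;> rcases j with j | j <;>
        simp [Matrix.sub_apply]
    rwa [heq] at h₂
  have hBw : ∀ B ∈ Sw, Matrix.fromBlocks B 0 0 0 ∈ S := by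
    intro B hB
    have h₁ := h2 B hB 0 0
    have h₂ := S.sub_mem h₁ hP
    have heq : Matrix.fromBlocks (Aw + B) 0 0 0 - A - (Matrix.fromBlocks Aw 0 0 0 - A)
        = Matrix.fromBlocks B 0 0 0 := by
      ext i j
      rcases i with i | i <;> rcases j with j | j <;>
        simp [Matrix.sub_apply]
    rwa [heq] at h₂
  obtain ⟨B₃, hB₃S, hB₃c⟩ := h3
  set D := B₃ - (Matrix.fromBlocks Aw 0 0 0 - A) with hDdef
  have hDS : D ∈ S := S.sub_mem hB₃S hP
  have hDc : D (Sum.inr ()) (Sum.inr ()) = 1 := by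
    have hc : A (Sum.inr ()) (Sum.inr ()) + B₃ (Sum.inr ()) (Sum.inr ()) = 1 := by
      rw [← Matrix.add_apply]; exact hB₃c
    rw [hDdef]
    simp only [Matrix.sub_apply, Matrix.fromBlocks_apply₂₂, Matrix.zero_apply]
    linear_combination hc
  set N : Matrix (Fin n) (Fin n) K := Matrix.of (fun i j => D (Sum.inl i) (Sum.inl j)) with hNdef
  set C₀ : Matrix (Fin n) Unit K := Matrix.of (fun i _ => D (Sum.inl i) (Sum.inr ())) with hC₀def
  set L₀ : Matrix Unit (Fin n) K := Matrix.of (fun _ j => D (Sum.inr ()) (Sum.inl j)) with hL₀def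
  have hB'' : D - Matrix.fromBlocks 0 C₀ L₀ 0 = Matrix.fromBlocks N 0 0 1 := by
    ext i j
    rcases i with i | i <;> rcases j with j | j <;>
      simp [Matrix.sub_apply, hNdef, hC₀def, hL₀def, Matrix.one_apply, hDc]
  have hB''S : Matrix.fromBlocks N 0 0 1 ∈ S := hB'' ▸ S.sub_mem hDS (hCL L₀ C₀)
  -- goodness of Aw + Sw + K N
  have hNg : ∀ B ∈ Sw, ∀ lam : K, IsUnit (Aw + B + lam • N) := by
    intro B hB lam
    by_cases hl : lam = 0
    · simpa [hl] using hW B hB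
    by_contra hM
    obtain ⟨L, C, hrank⟩ := rank_small hn (Aw + B + lam • N) lam hl hM
    have hXS : (Matrix.fromBlocks (Aw + B) C L 0 - A) + lam • (Matrix.fromBlocks N 0 0 1) ∈ S :=
      S.add_mem (h2 B hB L C) (S.smul_mem lam hB''S)
    have hAX : A + ((Matrix.fromBlocks (Aw + B) C L 0 - A) + lam • Matrix.fromBlocks N 0 0 1)
        = Matrix.fromBlocks (Aw + B + lam • N) C L (lam • 1) := by
      ext i j
      rcases i with i | i <;> rcases j with j | j <;>
        simp [Matrix.add_apply, Matrix.sub_apply] <;> ring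
    have hge := h1 _ hXS
    rw [hAX] at hge
    omega
  -- N ∈ Sw via dimension bound
  have hNS : N ∈ Sw := by
    by_contra hNS
    set T := Sw ⊔ Submodule.span K {N} with hTdef
    have hgoodT : ∀ B' ∈ T, IsUnit (Aw + B') := by
      intro B' hB'
      rw [hTdef, Submodule.mem_sup] at hB'
      obtain ⟨B, hB, z, hz, rfl⟩ := hB'
      obtain ⟨c, rfl⟩ := Submodule.mem_span_singleton.1 hz
      rw [← add_assoc]
      exact hNg B hB c
    have hb := good_matrix_bound Aw T hgoodT
    have hlt : Sw < T := by
      refine lt_of_le_of_ne le_sup_left (fun h => hNS ?_)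
      rw [h, hTdef]
      exact Submodule.mem_sup_right (Submodule.mem_span_singleton_self N)
    have := Submodule.finrank_lt_finrank_of_lt hlt
    rw [hWd] at this
    omega
  have hN0S : Matrix.fromBlocks N 0 0 0 ∈ S := hBw N hNS
  have hfin : Matrix.fromBlocks N 0 0 (1 : Matrix Unit Unit K)
      - Matrix.fromBlocks N 0 0 0 = Matrix.fromBlocks 0 0 0 1 := by
    ext i j
    rcases i with i | i <;> rcases j with j | j <;>
      simp [Matrix.sub_apply]
  exact hfin ▸ S.sub_mem hB''S hN0S
end
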